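/- Let G be a finite simple graph with n ≥ 1 vertices. If G admits a proper 3-coloring, then min_I Béz(A(G × K₃); I) = (3n)!/(n!)³, where I ranges over all partitions of the 3n vertices of G × K₃. If G admits no proper 3-coloring, then 3 · min_I Béz(A(G × K₃); I) ≥ 4 · (3n)!/(n!)³. -/

import Mathlib

open Finset

open Classical in
/-- The support `A(H)` of a graph `H`: the exponent vectors `e_{v₁} + ⋯ + e_{v_s}`
(indicator vectors) of the cliques `{v₁, …, v_s}` of `H` of size `s ≤ 3`. -/
noncomputable def graphSupport {V : Type*} [Fintype V] (H : SimpleGraph V) :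
    Finset (V → ℕ) :=
  ((Finset.univ : Finset (Finset V)).filter
      (fun T : Finset V => T.card ≤ 3 ∧ H.IsClique (T : Set V))).image
    (fun T v => if v ∈ T then 1 else 0)

/-- The multi-homogeneous Bézout number of a support `A` with respect to the family
of groups of variables `I₁, …, I_k`, namely `(m!/(a₁!⋯a_k!)) · ∏_j d_j ^ a_j` where
`a_j = #I_j` and `d_j = max_{α ∈ A} ∑_{l ∈ I_j} α_l`. -/
noncomputable def bez {V : Type*} [Fintype V] (A : Finset (V → ℕ))
    {k : ℕ} (I : Fin k → Finset V) : ℕ :=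
  Nat.multinomial Finset.univ (fun j => (I j).card) *
    ∏ j, (A.sup fun α => ∑ l ∈ I j, α l) ^ (I j).card

/-- `I₁, …, I_k` is a partition of the (finite) type `V`: the classes are pairwise
disjoint and they cover `V`. -/
def IsPartitionFam {V : Type*} {k : ℕ} (I : Fin k → Finset V) : Prop :=
  (∀ i j, i ≠ j → Disjoint (I i) (I j)) ∧ ∀ v, ∃ j, v ∈ I j

/-- The family of classes `I₁, …, I_k` is a proper coloring of `H`: no class contains
two adjacent vertices. -/
def ProperFam {V : Type*} (H : SimpleGraph V) {k : ℕ} (I : Fin k → Finset V) : Prop :=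
  ∀ j, ∀ u ∈ I j, ∀ v ∈ I j, ¬ H.Adj u v

/-- The minimal multi-homogeneous Bézout number of a support `A`, over all partitions
of the set of variables. -/
noncomputable def minBez {V : Type*} [Fintype V] (A : Finset (V → ℕ)) : ℕ :=
  sInf {b : ℕ | ∃ (k : ℕ) (I : Fin k → Finset V), IsPartitionFam I ∧ bez A I = b}

open Classical in
/-- The `l`-fold cartesian product `A^l` of a support `A ⊆ ℕ^V`: the concatenations
`(α⁽¹⁾, …, α⁽ˡ⁾)` of members of `A`, indexed by `Fin l × V`. -/
noncomputable def powSupport {V : Type*} [Fintype V] (A : Finset (V → ℕ)) (l : ℕ) :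
    Finset (Fin l × V → ℕ) :=
  (Fintype.piFinset (fun _ : Fin l => A)).image (fun f p => f p.1 p.2)

/-!
Write `n = #V`, `aⱼ = #Iⱼ` and `dⱼ` for the degree of `A(G □ K₃)` in the group `Iⱼ`. Every fibre
`{v} × K₃` is a triangle, so `aⱼ ≤ n · dⱼ`. Splitting each `aⱼ` into `dⱼ` parts of size at most
`n`, the multinomial bound `aⱼ! ≤ dⱼ ^ (aⱼ - 1) · ∏ (parts)!` and the concavity bound
`∏ cᵢ! ≤ (n!)³` for parts `cᵢ ≤ n` summing to `3n` give `(3n)! ≤ (n!)³ · Béz`. A proper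
3-colouring `c` of `G` yields the partition `{(v, i) | c v + i = s}` into three independent sets
of size `n`, which attains this bound.

If `G` is not 3-colourable, either some `dⱼ ≥ 2`, and then `dⱼ ^ (aⱼ - 1)` is at most half of
`dⱼ ^ aⱼ`, or all groups are independent, hence of size at most `n`. They cannot all have size
`0` or `n`, since then exactly three of them are nonempty and colour the layer `V × {0}`; and a
group of size strictly between `0` and `n` costs a factor `(n choose aⱼ) ≥ 2` in the concavity
bound.
-/

open SimpleGraph
open scoped Nat

namespace Nat

theorem two_le_choose {n k : ℕ} (hk₀ : 0 < k) (hkn : k < n) : 2 ≤ n.choose k := by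
  obtain ⟨m, rfl⟩ : ∃ m, n = m + 1 := ⟨n - 1, by omega⟩
  obtain ⟨i, rfl⟩ : ∃ i, k = i + 1 := ⟨k - 1, by omega⟩
  rw [choose_succ_succ']
  have := choose_pos (show i ≤ m by omega)
  have := choose_pos (show i + 1 ≤ m by omega)
  omega

theorem succ_choose_succ_mul_pow_le {d m k : ℕ} (hd : 0 < d) (hk : k < m) :
    (m + 1).choose (k + 1) * d ^ k ≤ (d + 1) ^ m := by
  have hpair : d ^ k * m.choose k + d ^ (k + 1) * m.choose (k + 1) ≤ (d + 1) ^ m := by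
    have := sum_le_sum_of_subset (f := fun i => d ^ i * 1 ^ (m - i) * m.choose i)
      (show {k, k + 1} ⊆ range (m + 1) by intro i; simp; omega)
    simpa [add_pow, sum_pair] using this
  calc (m + 1).choose (k + 1) * d ^ k = d ^ k * m.choose k + d ^ k * m.choose (k + 1) := by
        rw [choose_succ_succ']; ring
    _ ≤ d ^ k * m.choose k + d ^ (k + 1) * m.choose (k + 1) := by
        gcongr
        exact k.le_succ
    _ ≤ (d + 1) ^ m := hpair

theorem add_choose_mul_pow_pred_le {b c d : ℕ} (hd : 0 < d) (hc : 0 < c) :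
    (b + c).choose b * d ^ (c - 1) ≤ (d + 1) ^ (b + c - 1) := by
  rcases Nat.eq_zero_or_pos b with rfl | hb
  · simpa using Nat.pow_le_pow_left d.le_succ (c - 1)
  have := succ_choose_succ_mul_pow_le hd (show c - 1 < b + c - 1 by omega)
  rwa [show b + c - 1 + 1 = b + c by omega, show c - 1 + 1 = c by omega,
    ← choose_symm_add] at this

theorem multinomial_le_card_pow_pred {ι : Type*} (s : Finset ι) (f : ι → ℕ) :
    multinomial s f ≤ #s ^ (∑ i ∈ s, f i - 1) := by
  induction s using Finset.cons_induction with
  | empty => simp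
  | cons a s ha ih =>
    rw [multinomial_cons, card_cons, sum_cons]
    rcases Nat.eq_zero_or_pos (∑ i ∈ s, f i) with hs | hs
    · rw [hs, Nat.zero_sub, pow_zero] at ih
      rw [hs, add_zero, choose_self, one_mul]
      exact ih.trans (Nat.one_le_pow _ _ (succ_pos _))
    · have hcard : 0 < #s := Finset.card_pos.2 (nonempty_of_sum_ne_zero hs.ne')
      calc (f a + ∑ i ∈ s, f i).choose (f a) * multinomial s f
          ≤ (f a + ∑ i ∈ s, f i).choose (f a) * #s ^ (∑ i ∈ s, f i - 1) :=
            Nat.mul_le_mul_left _ ih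
        _ ≤ (#s + 1) ^ (f a + ∑ i ∈ s, f i - 1) := add_choose_mul_pow_pred_le hcard hs

theorem factorial_sum_le_prod_factorial_mul_card_pow_pred {ι : Type*} (s : Finset ι)
    (f : ι → ℕ) : (∑ i ∈ s, f i)! ≤ (∏ i ∈ s, (f i)!) * #s ^ (∑ i ∈ s, f i - 1) := by
  rw [← multinomial_spec]
  exact Nat.mul_le_mul_left _ (multinomial_le_card_pow_pred s f)

theorem exists_le_sum_eq_of_le_mul {n a d : ℕ} (h : a ≤ n * d) :
    ∃ b : Fin d → ℕ, (∀ i, b i ≤ n) ∧ ∑ i, b i = a := by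
  induction d generalizing a with
  | zero => exact ⟨Fin.elim0, fun i => i.elim0, by simp_all⟩
  | succ d ih =>
    obtain ⟨b, hbn, hb⟩ := ih (a := a - min a n) (by rw [Nat.mul_succ] at h; omega)
    refine ⟨Fin.cons (min a n) b, Fin.cases (min_le_right a n) hbn, ?_⟩
    rw [Fin.sum_cons, hb]
    omega

theorem factorial_mul_factorial_le {b r n : ℕ} (hb : b ≤ n) (hr : r ≤ n) (h : n ≤ b + r) :
    b ! * r ! ≤ n ! * (b + r - n)! := by
  have hb' := choose_mul_factorial_mul_factorial (show n - r ≤ b by omega)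
  have hn' := choose_mul_factorial_mul_factorial (show n - r ≤ n by omega)
  rw [show b - (n - r) = b + r - n by omega] at hb'
  rw [Nat.sub_sub_self hr] at hn'
  calc b ! * r ! = b.choose (n - r) * (n - r)! * (b + r - n)! * r ! := by rw [hb']
    _ ≤ n.choose (n - r) * (n - r)! * (b + r - n)! * r ! := by gcongr
    _ = n ! * (b + r - n)! := by rw [← hn']; ring

theorem factorial_mul_factorial_le_factorial_pow_mul_factorial_mod {b r n : ℕ} (hb : b ≤ n)
    (hr : r < n) : b ! * r ! ≤ n ! ^ ((r + b) / n) * ((r + b) % n)! := by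
  by_cases h : r + b < n
  · rw [Nat.div_eq_of_lt h, Nat.mod_eq_of_lt h, pow_zero, one_mul, add_comm]
    exact Nat.le_of_dvd (factorial_pos _) (factorial_mul_factorial_dvd_factorial_add b r)
  · rw [show r + b = r + b - n + n * 1 by omega, Nat.add_mul_div_left _ _ (by omega),
      Nat.add_mul_mod_self_left, Nat.div_eq_of_lt (by omega), Nat.mod_eq_of_lt (by omega),
      zero_add, pow_one, show r + b - n = b + r - n by omega]
    exact factorial_mul_factorial_le hb hr.le (by omega)

theorem prod_factorial_le_factorial_pow_mul_factorial_mod {ι : Type*} {s : Finset ι}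
    {c : ι → ℕ} {n : ℕ} (hn : 0 < n) (hc : ∀ i ∈ s, c i ≤ n) :
    ∏ i ∈ s, (c i)! ≤ n ! ^ ((∑ i ∈ s, c i) / n) * ((∑ i ∈ s, c i) % n)! := by
  induction s using Finset.cons_induction with
  | empty => simp
  | cons a s ha ih =>
    set X := ∑ i ∈ s, c i
    have hX : c a + X = (X % n + c a) + n * (X / n) := by
      have := Nat.mod_add_div X n
      omega
    rw [prod_cons, sum_cons, hX, Nat.add_mul_div_left _ _ hn, Nat.add_mul_mod_self_left, pow_add]
    calc (c a)! * ∏ i ∈ s, (c i)! ≤ (c a)! * (n ! ^ (X / n) * (X % n)!) :=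
          Nat.mul_le_mul_left _ (ih fun i hi => hc i (mem_cons_of_mem hi))
      _ = n ! ^ (X / n) * ((c a)! * (X % n)!) := by ring
      _ ≤ n ! ^ (X / n) * (n ! ^ ((X % n + c a) / n) * ((X % n + c a) % n)!) :=
          Nat.mul_le_mul_left _ (factorial_mul_factorial_le_factorial_pow_mul_factorial_mod
            (hc a (mem_cons_self a s)) (Nat.mod_lt X hn))
      _ = _ := by ring

section Family

variable {ι : Type*} [Fintype ι]

theorem prod_factorial_le_factorial_pow_mul_prod_pow_pred {a d : ι → ℕ} {n q : ℕ} (hn : 0 < n)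
    (had : ∀ j, a j ≤ n * d j) (hsum : ∑ j, a j = q * n) :
    ∏ j, (a j)! ≤ n ! ^ q * ∏ j, d j ^ (a j - 1) := by
  choose b hbn hb using fun j => exists_le_sum_eq_of_le_mul (had j)
  have hparts : ∏ j, ∏ i, (b j i)! ≤ n ! ^ q := by
    have h := prod_factorial_le_factorial_pow_mul_factorial_mod hn
      (s := (univ : Finset ((j : ι) × Fin (d j)))) (c := fun p => b p.1 p.2)
      (fun p _ => hbn p.1 p.2)
    rw [← univ_sigma_univ, prod_sigma, sum_sigma] at h
    simp only [hb, hsum, Nat.mul_div_cancel _ hn, Nat.mul_mod_left, factorial_zero,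
      mul_one] at h
    exact h
  calc ∏ j, (a j)! ≤ ∏ j, ((∏ i, (b j i)!) * d j ^ (a j - 1)) := prod_le_prod' fun j _ => by
        simpa [hb j] using factorial_sum_le_prod_factorial_mul_card_pow_pred univ (b j)
    _ = (∏ j, ∏ i, (b j i)!) * ∏ j, d j ^ (a j - 1) := prod_mul_distrib
    _ ≤ n ! ^ q * ∏ j, d j ^ (a j - 1) := Nat.mul_le_mul_right _ hparts

theorem factorial_le_factorial_pow_mul_multinomial_mul_prod_pow_pred {a d : ι → ℕ} {n q : ℕ}
    (hn : 0 < n) (had : ∀ j, a j ≤ n * d j) (hsum : ∑ j, a j = q * n) :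
    (q * n)! ≤ n ! ^ q * (multinomial univ a * ∏ j, d j ^ (a j - 1)) := by
  rw [← hsum, ← multinomial_spec]
  calc (∏ j, (a j)!) * multinomial univ a
      ≤ (n ! ^ q * ∏ j, d j ^ (a j - 1)) * multinomial univ a :=
        Nat.mul_le_mul_right _ (prod_factorial_le_factorial_pow_mul_prod_pow_pred hn had hsum)
    _ = n ! ^ q * (multinomial univ a * ∏ j, d j ^ (a j - 1)) := by ring

theorem two_mul_prod_factorial_le_factorial_pow [DecidableEq ι] {c : ι → ℕ} {n q : ℕ}
    (hc : ∀ j, c j ≤ n) (hsum : ∑ j, c j = q * n) {j₀ : ι} (h₀ : 0 < c j₀) (h₁ : c j₀ < n) :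
    2 * ∏ j, (c j)! ≤ n ! ^ q := by
  have hn : 0 < n := by omega
  obtain ⟨q, rfl⟩ := Nat.exists_eq_add_one_of_ne_zero fun hq : q = 0 => by
    have := hsum ▸ single_le_sum (fun j _ => zero_le (c j)) (mem_univ j₀)
    simp only [hq, zero_mul] at this
    omega
  have hrest : ∑ j ∈ univ.erase j₀, c j = (n - c j₀) + n * q := by
    have : ∑ j ∈ univ.erase j₀, c j + c j₀ = n * q + n := by
      rw [sum_erase_add _ _ (mem_univ j₀), hsum]; ring
    omega
  have h := prod_factorial_le_factorial_pow_mul_factorial_mod hn (s := univ.erase j₀)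
    (fun j _ => hc j)
  rw [hrest, Nat.add_mul_div_left _ _ hn, Nat.add_mul_mod_self_left, Nat.div_eq_of_lt (by omega),
    Nat.mod_eq_of_lt (by omega), zero_add] at h
  have hchoose : 2 * ((c j₀)! * (n - c j₀)!) ≤ n ! := by
    rw [← choose_mul_factorial_mul_factorial h₁.le, mul_assoc]
    exact Nat.mul_le_mul_right _ (two_le_choose h₀ h₁)
  calc 2 * ∏ j, (c j)! = 2 * ((c j₀)! * ∏ j ∈ univ.erase j₀, (c j)!) := by
        rw [mul_prod_erase univ (fun j => (c j)!) (mem_univ j₀)]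
    _ ≤ 2 * ((c j₀)! * (n ! ^ q * (n - c j₀)!)) := by gcongr
    _ = 2 * ((c j₀)! * (n - c j₀)!) * n ! ^ q := by ring
    _ ≤ n ! * n ! ^ q := by gcongr
    _ = n ! ^ (q + 1) := by ring

theorem pow_pred_le_pow {d a : ℕ} (h : 0 < a → 0 < d) : d ^ (a - 1) ≤ d ^ a := by
  rcases Nat.eq_zero_or_pos a with rfl | ha
  · simp
  · exact Nat.pow_le_pow_right (h ha) (Nat.sub_le a 1)

theorem two_mul_prod_pow_pred_le_prod_pow [DecidableEq ι] {a d : ι → ℕ}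
    (h : ∀ j, 0 < a j → 0 < d j) {j₀ : ι} (hd : 2 ≤ d j₀) (ha : 0 < a j₀) :
    2 * ∏ j, d j ^ (a j - 1) ≤ ∏ j, d j ^ a j := by
  rw [← mul_prod_erase _ _ (mem_univ j₀), ← mul_prod_erase univ (fun j => d j ^ a j) (mem_univ j₀),
    ← mul_assoc]
  refine Nat.mul_le_mul ?_ (prod_le_prod' fun j _ => pow_pred_le_pow (h j))
  calc 2 * d j₀ ^ (a j₀ - 1) ≤ d j₀ ^ (a j₀ - 1) * d j₀ := by rw [mul_comm]; gcongr
    _ = d j₀ ^ a j₀ := by rw [← pow_succ, Nat.sub_add_cancel ha]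

end Family

end Nat

section GroupDegree

variable {W : Type*}

def groupDegree (A : Finset (W → ℕ)) (S : Finset W) : ℕ :=
  A.sup fun α => ∑ l ∈ S, α l

variable [Fintype W]

theorem bez_eq (A : Finset (W → ℕ)) {k : ℕ} (I : Fin k → Finset W) :
    bez A I = Nat.multinomial univ (fun j => #(I j)) * ∏ j, groupDegree A (I j) ^ #(I j) :=
  rfl

theorem minBez_le (A : Finset (W → ℕ)) {k : ℕ} {I : Fin k → Finset W}
    (hI : IsPartitionFam I) : minBez A ≤ bez A I :=
  Nat.sInf_le ⟨k, I, hI, rfl⟩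

theorem exists_isPartitionFam_bez_eq_minBez (A : Finset (W → ℕ)) :
    ∃ (k : ℕ) (I : Fin k → Finset W), IsPartitionFam I ∧ bez A I = minBez A :=
  Nat.sInf_mem (s := {b | ∃ (k : ℕ) (I : Fin k → Finset W), IsPartitionFam I ∧ bez A I = b})
    ⟨_, 1, fun _ => univ,
    ⟨fun i j h => absurd (Subsingleton.elim i j) h, fun _ => ⟨0, mem_univ _⟩⟩, rfl⟩

theorem IsPartitionFam.sum_card {k : ℕ} {I : Fin k → Finset W} (hI : IsPartitionFam I) :
    ∑ j, #(I j) = Fintype.card W := by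
  classical
  rw [← card_biUnion fun i _ j _ hij => hI.1 i j hij, ← card_univ]
  congr
  refine eq_univ_of_forall fun w => ?_
  obtain ⟨j, hj⟩ := hI.2 w
  exact mem_biUnion.2 ⟨j, mem_univ j, hj⟩

variable {H : SimpleGraph W} {S T : Finset W}

theorem card_inter_le_groupDegree_graphSupport [DecidableEq W] (hT : #T ≤ 3) (hc : H.IsClique (T : Set W)) :
    #(S ∩ T) ≤ groupDegree (graphSupport H) S := by
  have hmem : (fun v => if v ∈ T then 1 else 0) ∈ graphSupport H := by
    simp only [graphSupport, mem_image, mem_filter, mem_univ, true_and]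
    exact ⟨T, ⟨hT, hc⟩, by ext; congr⟩
  refine le_of_eq_of_le ?_ (le_sup (f := fun α => ∑ l ∈ S, α l) hmem)
  simp [sum_ite_mem]

theorem groupDegree_graphSupport_le_one (hS : H.IsIndepSet S) :
    groupDegree (graphSupport H) S ≤ 1 := by
  classical
  refine Finset.sup_le fun α hα => ?_
  obtain ⟨T, hT, rfl⟩ := mem_image.1 hα
  have hc : H.IsClique (T : Set W) := (mem_filter.1 hT).2.2
  simp only [sum_ite_mem, sum_const, smul_eq_mul, mul_one]
  refine card_le_one.2 fun u hu v hv => ?_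
  rw [mem_inter] at hu hv
  by_contra huv
  exact hS hu.1 hv.1 huv (hc hu.2 hv.2 huv)

theorem one_le_groupDegree_graphSupport (hS : S.Nonempty) :
    1 ≤ groupDegree (graphSupport H) S := by
  classical
  obtain ⟨w, hw⟩ := hS
  refine le_trans ?_ (card_inter_le_groupDegree_graphSupport (T := {w}) (by simp) (by simp))
  simp [hw]

theorem two_le_groupDegree_graphSupport {u v : W} (hu : u ∈ S) (hv : v ∈ S) (huv : H.Adj u v) :
    2 ≤ groupDegree (graphSupport H) S := by
  classical
  refine le_trans ?_ (card_inter_le_groupDegree_graphSupport (T := {u, v})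
    (card_le_two.trans (by norm_num)) (by simp [huv]))
  rw [inter_eq_right.2 (by simp [insert_subset_iff, hu, hv]), card_pair huv.ne]

end GroupDegree

theorem exists_isPartitionFam_properFam_iff_colorable {V : Type*} [Fintype V]
    (G : SimpleGraph V) (k : ℕ) :
    (∃ I : Fin k → Finset V, IsPartitionFam I ∧ ProperFam G I) ↔ G.Colorable k := by
  classical
  constructor
  · rintro ⟨I, hI, hG⟩
    choose c hc using hI.2
    exact ⟨Coloring.mk c fun {u v} huv hcuv => hG (c u) u (hc u) v (hcuv ▸ hc v) huv⟩
  · rintro ⟨C⟩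
    refine ⟨fun j => {v | C v = j}, ⟨fun i j hij => disjoint_filter.2 fun v _ hi hj => hij
      (hi ▸ hj), fun v => ⟨C v, by simp⟩⟩, fun j u hu v hv huv => ?_⟩
    simp only [mem_filter, mem_univ, true_and] at hu hv
    exact C.valid huv (hu.trans hv.symm)

section BoxProduct

variable {V : Type*} {G : SimpleGraph V}

theorem isClique_singleton_product_univ {α : Type*} [Fintype α] (v : V) :
    (G □ completeGraph α).IsClique (({v} ×ˢ univ : Finset (V × α)) : Set (V × α)) := by
  intro x hx y hy hxy
  simp only [coe_product, coe_singleton, coe_univ, Set.mem_prod, Set.mem_singleton_iff,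
    Set.mem_univ, and_true] at hx hy
  exact boxProd_adj.2 (Or.inr ⟨fun h => hxy (Prod.ext (hx.trans hy.symm) h), hx.trans hy.symm⟩)

variable [Fintype V]

theorem card_le_card_mul_groupDegree {α : Type*} [Fintype α] (hα : Fintype.card α ≤ 3)
    (S : Finset (V × α)) :
    #S ≤ Fintype.card V * groupDegree (graphSupport (G □ completeGraph α)) S := by
  classical
  rw [card_eq_sum_card_fiberwise (f := Prod.fst) (t := univ) fun _ _ => mem_coe.2 (mem_univ _),
    ← card_univ, ← smul_eq_mul, ← sum_const]
  refine sum_le_sum fun v _ => ?_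
  have hfiber : {w ∈ S | w.1 = v} = S ∩ ({v} ×ˢ univ) := by
    ext ⟨x, a⟩
    simp [eq_comm]
  rw [hfiber]
  exact card_inter_le_groupDegree_graphSupport (by simpa using hα)
    (isClique_singleton_product_univ v)

theorem exists_isPartitionFam_bez_eq_of_colorable (hG : G.Colorable 3) :
    ∃ I : Fin 3 → Finset (V × Fin 3), IsPartitionFam I ∧
      bez (graphSupport (G □ completeGraph (Fin 3))) I =
        (3 * Fintype.card V)! / (Fintype.card V)! ^ 3 := by
  classical
  obtain ⟨C⟩ := hG
  let I : Fin 3 → Finset (V × Fin 3) := fun s => {w | C w.1 + w.2 = s}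
  have hI : IsPartitionFam I :=
    ⟨fun s t hst => disjoint_filter.2 fun w _ hs ht => hst (hs ▸ ht),
      fun w => ⟨C w.1 + w.2, by simp [I]⟩⟩
  have hcard : ∀ s, #(I s) = Fintype.card V := fun s => by
    rw [← card_univ]
    refine card_nbij' Prod.fst (fun v => (v, s - C v)) (by simp) (by simp [I]) ?_
      fun v _ => rfl
    intro w hw
    simp only [I, coe_filter, mem_univ, true_and, Set.mem_ofPred_eq] at hw
    simp [← hw]
  have hindep : ∀ s, (G □ completeGraph (Fin 3)).IsIndepSet (I s) := by
    intro s u hu v hv _ huv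
    simp only [I, coe_filter, mem_univ, true_and, Set.mem_ofPred_eq] at hu hv
    rcases boxProd_adj.1 huv with ⟨hG, h2⟩ | ⟨hK, h1⟩
    · exact C.valid hG (add_right_cancel (hu.trans (h2 ▸ hv.symm)))
    · exact hK (add_left_cancel (hu.trans (h1 ▸ hv.symm)))
  have hpow : ∀ s, groupDegree (graphSupport (G □ completeGraph (Fin 3))) (I s) ^ #(I s) = 1 := by
    intro s
    rcases (I s).eq_empty_or_nonempty with h | h
    · simp [h]
    · rw [le_antisymm (groupDegree_graphSupport_le_one (hindep s))
        (one_le_groupDegree_graphSupport h), one_pow]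
  refine ⟨I, hI, ?_⟩
  rw [bez_eq, prod_eq_one fun s _ => hpow s, mul_one]
  simp [hcard, Nat.multinomial]

end BoxProduct

section LowerBound

variable {V : Type*} [Fintype V] {G : SimpleGraph V} {k : ℕ} {I : Fin k → Finset (V × Fin 3)}

theorem IsPartitionFam.sum_card_eq_three_mul (hI : IsPartitionFam I) :
    ∑ j, #(I j) = 3 * Fintype.card V := by
  rw [hI.sum_card, Fintype.card_prod, Fintype.card_fin, mul_comm]

theorem factorial_le_factorial_pow_mul_multinomial_mul_prod_groupDegree_pow_pred
    (hV : 0 < Fintype.card V) (hI : IsPartitionFam I) :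
    (3 * Fintype.card V)! ≤ (Fintype.card V)! ^ 3 * (Nat.multinomial univ (fun j => #(I j)) *
      ∏ j, groupDegree (graphSupport (G □ completeGraph (Fin 3))) (I j) ^ (#(I j) - 1)) :=
  Nat.factorial_le_factorial_pow_mul_multinomial_mul_prod_pow_pred hV
    (fun j => card_le_card_mul_groupDegree (by simp) (I j)) hI.sum_card_eq_three_mul

theorem factorial_le_factorial_pow_mul_bez (hV : 0 < Fintype.card V) (hI : IsPartitionFam I) :
    (3 * Fintype.card V)! ≤
      (Fintype.card V)! ^ 3 * bez (graphSupport (G □ completeGraph (Fin 3))) I := by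
  refine (factorial_le_factorial_pow_mul_multinomial_mul_prod_groupDegree_pow_pred
    (G := G) hV hI).trans ?_
  rw [bez_eq]
  exact Nat.mul_le_mul_left _ <| Nat.mul_le_mul_left _ <| prod_le_prod' fun j _ =>
    Nat.pow_pred_le_pow fun h => one_le_groupDegree_graphSupport (Finset.card_pos.1 h)

theorem two_mul_factorial_le_factorial_pow_mul_bez_of_two_le_groupDegree
    (hV : 0 < Fintype.card V) (hI : IsPartitionFam I) {j₀ : Fin k}
    (hj₀ : 2 ≤ groupDegree (graphSupport (G □ completeGraph (Fin 3))) (I j₀)) :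
    2 * (3 * Fintype.card V)! ≤
      (Fintype.card V)! ^ 3 * bez (graphSupport (G □ completeGraph (Fin 3))) I := by
  have ha : 0 < #(I j₀) := by
    refine Finset.card_pos.2 (nonempty_iff_ne_empty.2 fun h => ?_)
    simp [h, groupDegree] at hj₀
  calc 2 * (3 * Fintype.card V)!
      ≤ 2 * ((Fintype.card V)! ^ 3 * (Nat.multinomial univ (fun j => #(I j)) *
          ∏ j, groupDegree (graphSupport (G □ completeGraph (Fin 3))) (I j) ^ (#(I j) - 1))) :=
        Nat.mul_le_mul_left 2
          (factorial_le_factorial_pow_mul_multinomial_mul_prod_groupDegree_pow_pred hV hI)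
    _ = (Fintype.card V)! ^ 3 * (Nat.multinomial univ (fun j => #(I j)) * (2 *
          ∏ j, groupDegree (graphSupport (G □ completeGraph (Fin 3))) (I j) ^ (#(I j) - 1))) := by
        ring
    _ ≤ (Fintype.card V)! ^ 3 * bez (graphSupport (G □ completeGraph (Fin 3))) I := by
        rw [bez_eq]
        gcongr
        exact Nat.two_mul_prod_pow_pred_le_prod_pow
          (fun j h => one_le_groupDegree_graphSupport (Finset.card_pos.1 h)) hj₀ ha

theorem two_mul_factorial_le_factorial_pow_mul_bez_of_card_lt (hI : IsPartitionFam I)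
    (hcard : ∀ j, #(I j) ≤ Fintype.card V) {j₀ : Fin k} (h₀ : 0 < #(I j₀))
    (h₁ : #(I j₀) < Fintype.card V) :
    2 * (3 * Fintype.card V)! ≤
      (Fintype.card V)! ^ 3 * bez (graphSupport (G □ completeGraph (Fin 3))) I := by
  have hprod : 0 < ∏ j, groupDegree (graphSupport (G □ completeGraph (Fin 3))) (I j) ^ #(I j) :=
    prod_pos fun j _ => Nat.pow_pos_iff.2 <| (Nat.eq_zero_or_pos _).symm.imp
      (fun h => one_le_groupDegree_graphSupport (Finset.card_pos.1 h)) id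
  calc 2 * (3 * Fintype.card V)!
      = (2 * ∏ j, (#(I j))!) * Nat.multinomial univ (fun j => #(I j)) := by
        rw [← hI.sum_card_eq_three_mul, ← Nat.multinomial_spec]; ring
    _ ≤ (Fintype.card V)! ^ 3 * Nat.multinomial univ (fun j => #(I j)) :=
        Nat.mul_le_mul_right _ (Nat.two_mul_prod_factorial_le_factorial_pow hcard
          hI.sum_card_eq_three_mul h₀ h₁)
    _ ≤ (Fintype.card V)! ^ 3 * bez (graphSupport (G □ completeGraph (Fin 3))) I := by
        rw [bez_eq]
        gcongr
        exact Nat.le_mul_of_pos_right _ hprod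

theorem colorable_of_isIndepSet_of_card_eq (hV : 0 < Fintype.card V) (hI : IsPartitionFam I)
    (hindep : ∀ j, (G □ completeGraph (Fin 3)).IsIndepSet (I j))
    (hcard : ∀ j, #(I j) = 0 ∨ #(I j) = Fintype.card V) : G.Colorable 3 := by
  classical
  choose c hc using hI.2
  let S : Finset (Fin k) := {j | #(I j) ≠ 0}
  have hS : #S = 3 := by
    have h := sum_filter_ne_zero (s := univ) (f := fun j => #(I j))
    rw [hI.sum_card_eq_three_mul, sum_congr rfl fun j hj => (hcard j).resolve_left
      (mem_filter.1 hj).2, sum_const, smul_eq_mul] at h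
    exact Nat.eq_of_mul_eq_mul_right hV h
  let C : G.Coloring S := Coloring.mk
    (fun v => ⟨c (v, 0), mem_filter.2 ⟨mem_univ _, card_ne_zero.2 ⟨_, hc _⟩⟩⟩)
    fun {u v} huv hcuv => hindep (c (u, 0)) (hc _) (Subtype.mk.inj hcuv ▸ hc (v, 0))
      (by simpa using huv.ne) (boxProd_adj_left.2 huv)
  simpa [hS] using C.colorable

theorem two_mul_factorial_le_factorial_pow_mul_bez (hV : 0 < Fintype.card V)
    (hI : IsPartitionFam I) (hG : ¬ G.Colorable 3) :
    2 * (3 * Fintype.card V)! ≤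
      (Fintype.card V)! ^ 3 * bez (graphSupport (G □ completeGraph (Fin 3))) I := by
  by_cases hd : ∃ j, 2 ≤ groupDegree (graphSupport (G □ completeGraph (Fin 3))) (I j)
  · obtain ⟨j₀, hj₀⟩ := hd
    exact two_mul_factorial_le_factorial_pow_mul_bez_of_two_le_groupDegree hV hI hj₀
  push Not at hd
  have hindep : ∀ j, (G □ completeGraph (Fin 3)).IsIndepSet (I j) := fun j _ hu _ hv _ huv =>
    (two_le_groupDegree_graphSupport hu hv huv).not_gt (hd j)
  have hcard : ∀ j, #(I j) ≤ Fintype.card V := fun j => by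
    simpa using (card_le_card_mul_groupDegree (G := G) (by simp) (I j)).trans
      (Nat.mul_le_mul_left _ (Nat.le_of_lt_succ (hd j)))
  by_cases hmid : ∃ j, 0 < #(I j) ∧ #(I j) < Fintype.card V
  · obtain ⟨j₀, h₀, h₁⟩ := hmid
    exact two_mul_factorial_le_factorial_pow_mul_bez_of_card_lt hI hcard h₀ h₁
  push Not at hmid
  refine absurd (colorable_of_isIndepSet_of_card_eq hV hI hindep fun j => ?_) hG
  have := hcard j
  have := hmid j
  omega

end LowerBound

/-- Let `G` be a finite simple graph with `n ≥ 1` vertices. If `G`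
admits a proper 3-coloring then `min_I Béz(A(G □ K₃); I) = (3n)!/(n!)³`; otherwise
`3 · min_I Béz(A(G □ K₃); I) ≥ 4 · (3n)!/(n!)³`. -/
theorem stmt_12 {V : Type*} [Fintype V] (G : SimpleGraph V) (n : ℕ)
    (hn : Fintype.card V = n) (hn1 : 1 ≤ n) :
    ((∃ I : Fin 3 → Finset V, IsPartitionFam I ∧ ProperFam G I) →
        minBez (graphSupport (G.boxProd (SimpleGraph.completeGraph (Fin 3)))) =
          (3 * n).factorial / n.factorial ^ 3) ∧
      (¬ (∃ I : Fin 3 → Finset V, IsPartitionFam I ∧ ProperFam G I) →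
        4 * ((3 * n).factorial / n.factorial ^ 3) ≤
          3 * minBez (graphSupport (G.boxProd (SimpleGraph.completeGraph (Fin 3))))) := by
  subst hn
  rw [exists_isPartitionFam_properFam_iff_colorable]
  obtain ⟨k, J, hJ, hmin⟩ := exists_isPartitionFam_bez_eq_minBez
    (graphSupport (G □ completeGraph (Fin 3)))
  rw [← hmin]
  refine ⟨fun hG => ?_, fun hG => ?_⟩
  · obtain ⟨I, hI, hbez⟩ := exists_isPartitionFam_bez_eq_of_colorable hG
    exact le_antisymm (hmin ▸ hbez ▸ minBez_le _ hI)
      (Nat.div_le_of_le_mul (factorial_le_factorial_pow_mul_bez hn1 hJ))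
  · have := (Nat.mul_div_le_mul_div_assoc 2 _ _).trans
      (Nat.div_le_of_le_mul (two_mul_factorial_le_factorial_pow_mul_bez hn1 hJ hG))
    omega
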